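/- arXiv:2503.02260 — 3 statements merged into one kernel-verified Lean document; each statement's English description precedes it below -/
import Mathlib

section
/- In a lextensive category, if u : A → X and v : B → X are powerful morphisms, then the induced morphism [u,v] : A + B → X is powerful. -/
/-!
Pulling back along the two coproduct injections gives a functor
`Over (A ⨿ B) ⥤ Over A × Over B`, which is fully faithful because coproducts are universal:
every object over `A ⨿ B` is the coproduct of its two restrictions. Composed with this embedding,
pullback along `[u, v]` becomes `(u^*, v^*) : Over X ⥤ Over A × Over B`, whose right adjoint
sends `(a, b)` to `Π_u a × Π_v b`. An adjunction can be restricted along a fully faithful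
functor, so `[u, v]^*` is a left adjoint too.
-/

open CategoryTheory Limits

universe v₁ v₂ v₃ u₁ u₂ u₃

namespace CategoryTheory

section Adjunctions

variable {C : Type u₁} [Category.{v₁} C] {D₁ : Type u₂} [Category.{v₂} D₁]
  {D₂ : Type u₃} [Category.{v₃} D₂]

instance Functor.isLeftAdjoint_prod' [HasBinaryProducts C] (F₁ : C ⥤ D₁) (F₂ : C ⥤ D₂)
    [F₁.IsLeftAdjoint] [F₂.IsLeftAdjoint] : (F₁.prod' F₂).IsLeftAdjoint :=
  let adj₁ := Adjunction.ofIsLeftAdjoint F₁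
  let adj₂ := Adjunction.ofIsLeftAdjoint F₂
  Adjunction.isLeftAdjoint <| Adjunction.adjunctionOfEquivRight (F := F₁.prod' F₂)
    (G_obj := fun Y ↦ F₁.rightAdjoint.obj Y.1 ⨯ F₂.rightAdjoint.obj Y.2)
    (fun X Y ↦
      { toFun f := prod.lift (adj₁.homEquiv _ _ f.1) (adj₂.homEquiv _ _ f.2)
        invFun g :=
          ((adj₁.homEquiv _ _).symm (g ≫ prod.fst), (adj₂.homEquiv _ _).symm (g ≫ prod.snd))
        left_inv f := by simp [prod.lift_fst, prod.lift_snd]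
        right_inv g := by ext <;> simp [prod.lift_fst, prod.lift_snd] })
    (fun _ _ _ _ _ ↦ by
      ext <;> simp [prod.lift_fst, prod.lift_snd, Adjunction.homEquiv_naturality_left])

lemma Functor.isLeftAdjoint_of_comp_fullyFaithful {E : Type u₃} [Category.{v₃} E]
    {L : C ⥤ D₁} {R : D₁ ⥤ E} (hR : R.FullyFaithful) [(L ⋙ R).IsLeftAdjoint] :
    L.IsLeftAdjoint :=
  ((Adjunction.ofIsLeftAdjoint (L ⋙ R)).restrictFullyFaithful (Functor.FullyFaithful.id _) hR
    (Iso.refl _) (Functor.rightUnitor _).symm).isLeftAdjoint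

end Adjunctions

variable {C : Type u₁} [Category.{v₁} C]

section FinitaryPreExtensive

variable [FinitaryPreExtensive C] {A B Y : C}

noncomputable def FinitaryPreExtensive.isColimitPullbackFstInlInr (g : Y ⟶ A ⨿ B) :
    IsColimit (BinaryCofan.mk (pullback.fst g coprod.inl) (pullback.fst g coprod.inr)) := by
  have hl : IsPullback (pullback.fst g coprod.inl) (pullback.snd g coprod.inl) g coprod.inl :=
    .of_hasPullback _ _
  have hr : IsPullback (pullback.fst g coprod.inr) (pullback.snd g coprod.inr) g coprod.inr :=
    .of_hasPullback _ _
  refine (FinitaryPreExtensive.universal' _ (coprodIsCoprod A B) _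
    (mapPair (pullback.snd g coprod.inl) (pullback.snd g coprod.inr)) g ?_ (.of_discrete _) ?_).some
  · ext ⟨⟨⟩⟩
    exacts [hl.w.symm, hr.w.symm]
  · rintro ⟨⟨⟩⟩
    exacts [hl, hr]

lemma FinitaryPreExtensive.hom_ext_of_pullback_inl_inr {W : C} (g : Y ⟶ A ⨿ B) {f f' : Y ⟶ W}
    (hl : pullback.fst g coprod.inl ≫ f = pullback.fst g coprod.inl ≫ f')
    (hr : pullback.fst g coprod.inr ≫ f = pullback.fst g coprod.inr ≫ f') : f = f' :=
  BinaryCofan.IsColimit.hom_ext (isColimitPullbackFstInlInr g) hl hr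

end FinitaryPreExtensive

namespace Over

variable [HasPullbacks C]

noncomputable def pullbackCompIsoOfEq {X Y Z : C} {f : X ⟶ Y} {g : Y ⟶ Z} {h : X ⟶ Z}
    (w : f ≫ g = h) : Over.pullback g ⋙ Over.pullback f ≅ Over.pullback h :=
  (Over.pullbackComp f g).symm ≪≫ eqToIso (by subst w; rfl)

variable [HasBinaryCoproducts C] (A B : C)

noncomputable abbrev pullbackInlInr : Over (A ⨿ B) ⥤ Over A × Over B :=
  (Over.pullback coprod.inl).prod' (Over.pullback coprod.inr)

variable {A B} [FinitaryPreExtensive C]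

instance : (pullbackInlInr A B).Faithful where
  map_injective {g h} φ ψ e := Over.OverMorphism.ext <|
    FinitaryPreExtensive.hom_ext_of_pullback_inl_inr g.hom
      (by simpa [pullback.lift_fst] using
        congrArg (fun t ↦ t.1.left ≫ pullback.fst h.hom coprod.inl) e)
      (by simpa [pullback.lift_fst] using
        congrArg (fun t ↦ t.2.left ≫ pullback.fst h.hom coprod.inr) e)

instance : (pullbackInlInr A B).Full where
  map_surjective {g h} := by
    rintro ⟨α, β⟩
    have hc := FinitaryPreExtensive.isColimitPullbackFstInlInr g.hom
    obtain ⟨l, hl, hr⟩ : ∃ l : g.left ⟶ h.left,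
        pullback.fst g.hom coprod.inl ≫ l = α.left ≫ pullback.fst h.hom coprod.inl ∧
        pullback.fst g.hom coprod.inr ≫ l = β.left ≫ pullback.fst h.hom coprod.inr :=
      ⟨_, BinaryCofan.IsColimit.inl_desc hc _ _, BinaryCofan.IsColimit.inr_desc hc _ _⟩
    have wα : α.left ≫ pullback.snd h.hom coprod.inl = pullback.snd g.hom coprod.inl :=
      Over.w α
    have wβ : β.left ≫ pullback.snd h.hom coprod.inr = pullback.snd g.hom coprod.inr :=
      Over.w β
    have hw : l ≫ h.hom = g.hom := FinitaryPreExtensive.hom_ext_of_pullback_inl_inr g.hom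
      (by simp [reassoc_of% hl, pullback.condition, reassoc_of% wα])
      (by simp [reassoc_of% hr, pullback.condition, reassoc_of% wβ])
    refine ⟨Over.homMk l hw, Prod.ext ?_ ?_⟩
    · ext
      apply pullback.hom_ext
      · simpa [pullback.lift_fst] using hl
      · simpa [pullback.lift_snd] using wα.symm
    · ext
      apply pullback.hom_ext
      · simpa [pullback.lift_fst] using hr
      · simpa [pullback.lift_snd] using wβ.symm

variable {X : C} (u : A ⟶ X) (v : B ⟶ X)

noncomputable def pullbackCoprodDescCompIso :
    Over.pullback (coprod.desc u v) ⋙ pullbackInlInr A B ≅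
      (Over.pullback u).prod' (Over.pullback v) :=
  (prodFunctorToFunctorProd _ _ _).mapIso <|
    Iso.prod (pullbackCompIsoOfEq (coprod.inl_desc u v)) (pullbackCompIsoOfEq (coprod.inr_desc u v))

end Over

end CategoryTheory

theorem coprod_desc_powerful_general {C : Type u} [Category.{v} C]
    [HasFiniteLimits C] [FinitaryExtensive C]
    {A B X : C} (u : A ⟶ X) (v : B ⟶ X)
    (hu : (Over.pullback u).IsLeftAdjoint) (hv : (Over.pullback v).IsLeftAdjoint) :
    (Over.pullback (coprod.desc u v)).IsLeftAdjoint := by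
  have := Functor.isLeftAdjoint_of_iso (Over.pullbackCoprodDescCompIso u v).symm
  exact Functor.isLeftAdjoint_of_comp_fullyFaithful (.ofFullyFaithful (Over.pullbackInlInr A B))

/-- In a lextensive category, if `u : A ⟶ X` and `v : B ⟶ X` are powerful morphisms
(pullback along them is a left adjoint), then `[u,v] : A ⨿ B ⟶ X` is powerful. -/
theorem coprod_desc_powerful {C : Type u} [Category.{v} C]
    [HasFiniteLimits C] [HasFiniteCoproducts C] [FinitaryExtensive C]
    {A B X : C} (u : A ⟶ X) (v : B ⟶ X)
    (hu : (Over.pullback u).IsLeftAdjoint) (hv : (Over.pullback v).IsLeftAdjoint) :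
    (Over.pullback (coprod.desc u v)).IsLeftAdjoint :=
  coprod_desc_powerful_general u v hu hv
end

section
/- If a bicategory C has binary bicategorical products and R is a protocalibration of C, then R is closed under binary products of morphisms: if f : X → Y and f' : X' → Y' are in R, then f × f' : X × X' → Y × Y' is in R. -/
open CategoryTheory CategoryTheory.Bicategory

universe w v u v₁ v₂ u₁ u₂

section FunctorDefs

variable {E : Type u₁} [Category.{v₁} E] {D : Type u₂} [Category.{v₂} D]

/-- `κ` is cartesian for a functor `p`: the square of hom-sets is a pullback. -/
def IsCartesianMor (p : E ⥤ D) {z x : E} (κ : z ⟶ x) : Prop :=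
  ∀ {k : E} (g : k ⟶ x) (h : p.obj k ⟶ p.obj z),
    h ≫ p.map κ = p.map g → ∃! l : k ⟶ z, l ≫ κ = g ∧ p.map l = h

/-- A functor is a groupoid fibration of categories. -/
def IsGroupoidFibrationFunctor (p : E ⥤ D) : Prop :=
  (∀ {z x : E} (κ : z ⟶ x), IsCartesianMor p κ) ∧
  (∀ (x : E) {b : D} (φ : b ⟶ p.obj x),
    ∃ (z : E) (κ : z ⟶ x) (θ : b ≅ p.obj z), θ.hom ≫ p.map κ = φ)

/-- A functor is a groupoid opfibration when its opposite is a groupoid fibration. -/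
def IsGroupoidOpfibrationFunctor (p : E ⥤ D) : Prop :=
  IsGroupoidFibrationFunctor p.op

end FunctorDefs

variable {B : Type u} [Bicategory.{w, v} B]

/-- A 1-cell `p : a ⟶ b` of a bicategory is a groupoid opfibration when, for every
object `U`, the postcomposition functor `(U ⟶ a) ⥤ (U ⟶ b)` is a groupoid
opfibration of categories. -/
def IsGroupoidOpfibration1Cell {a b : B} (p : a ⟶ b) : Prop :=
  ∀ U : B, IsGroupoidOpfibrationFunctor ((Bicategory.postcomposing U a b).obj p)

/-- `f : a ⟶ b` is an equivalence 1-cell. -/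
def IsEquiv1Cell {a b : B} (f : a ⟶ b) : Prop :=
  ∃ g : b ⟶ a, Nonempty (𝟙 a ≅ f ≫ g) ∧ Nonempty (g ≫ f ≅ 𝟙 b)

/-- The universal property of a bicategorical pullback of `f : u ⟶ w` and `g : v ⟶ w`
with projections `gbar : p ⟶ u`, `fbar : p ⟶ v` and invertible 2-cell
`φ : gbar ≫ f ≅ fbar ≫ g`. -/
structure IsBipullback {u v w p : B} (f : u ⟶ w) (g : v ⟶ w)
    (gbar : p ⟶ u) (fbar : p ⟶ v) (φ : gbar ≫ f ≅ fbar ≫ g) : Prop where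
  lift : ∀ {t : B} (a : t ⟶ u) (b : t ⟶ v) (ψ : a ≫ f ≅ b ≫ g),
    ∃ (h : t ⟶ p) (ia : h ≫ gbar ≅ a) (ib : h ≫ fbar ≅ b),
      (ia.inv ▷ f) ≫ (α_ h gbar f).hom ≫ (h ◁ φ.hom) ≫ (α_ h fbar g).inv ≫
        (ib.hom ▷ g) = ψ.hom
  faithful₂ : ∀ {t : B} (h h' : t ⟶ p) (γ γ' : h ⟶ h'),
    γ ▷ gbar = γ' ▷ gbar → γ ▷ fbar = γ' ▷ fbar → γ = γ'
  full₂ : ∀ {t : B} (h h' : t ⟶ p) (β : h ≫ gbar ⟶ h' ≫ gbar)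
    (δ : h ≫ fbar ⟶ h' ≫ fbar),
    (β ▷ f) ≫ (α_ h' gbar f).hom ≫ (h' ◁ φ.hom) =
      (α_ h gbar f).hom ≫ (h ◁ φ.hom) ≫ (α_ h fbar g).inv ≫ (δ ▷ g) ≫
        (α_ h' fbar g).hom →
    ∃ γ : h ⟶ h', γ ▷ gbar = β ∧ γ ▷ fbar = δ

/-- A protocalibration of a bicategory: contains equivalences, closed under
isomorphism of 1-cells and composition, bipullbacks of members along arbitrary
morphisms exist with the corresponding projection a member, and all members are
groupoid opfibrations. -/
structure Protocalibration (R : ∀ ⦃a b : B⦄, (a ⟶ b) → Prop) : Prop where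
  equiv_mem : ∀ {a b : B} (f : a ⟶ b), IsEquiv1Cell f → R f
  iso_closed : ∀ {a b : B} (f g : a ⟶ b), (f ≅ g) → R f → R g
  comp_mem : ∀ {a b c : B} (f : a ⟶ b) (g : b ⟶ c), R f → R g → R (f ≫ g)
  bipullback : ∀ {u v w : B} (f : u ⟶ w) (g : v ⟶ w), R f →
    ∃ (p : B) (gbar : p ⟶ u) (fbar : p ⟶ v) (φ : gbar ≫ f ≅ fbar ≫ g),
      IsBipullback f g gbar fbar φ ∧ R fbar
  gpd_opfib : ∀ {a b : B} (f : a ⟶ b), R f → IsGroupoidOpfibration1Cell f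

/-- A binary bicategorical product of `X` and `X'`: an object `P` with projections
such that for every `W` the induced functor `(W ⟶ P) ⥤ (W ⟶ X) × (W ⟶ X')` is an
equivalence. -/
structure BinaryBiproduct (X X' : B) where
  P : B
  p : P ⟶ X
  p' : P ⟶ X'
  ue : ∀ W : B, (((Bicategory.postcomposing W P X).obj p).prod'
      ((Bicategory.postcomposing W P X').obj p')).IsEquivalence

/-!
Pulling `f` back along the projection `Y × Y' ⟶ Y` gives `f × 1 : X × Y' ⟶ Y × Y'`, and
pulling `f'` back along the projection `X × Y' ⟶ Y'` gives `1 × f' : X × X' ⟶ X × Y'`; both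
lie in `R`. Here `X × Y'` exists only as the first bipullback. The iterated bipullback is
equivalent to the given product `X × X'`, because its two projections detect isomorphic
1-cells; so `m ≅ e ≫ (1 × f') ≫ (f × 1)` with `e` an equivalence.
-/

variable {T X X' Y Y' Q Q₂ : B}

section Bipullback

variable {u v w p : B} {f : u ⟶ w} {g : v ⟶ w} {gbar : p ⟶ u} {fbar : p ⟶ v}
  {φ : gbar ≫ f ≅ fbar ≫ g}

/-- The compatibility condition of `IsBipullback.full₂`, solved for `δ ▷ g`. -/
def transportAlongSquare (φ : gbar ≫ f ≅ fbar ≫ g) {h h' : T ⟶ p} (β : h ≫ gbar ≅ h' ≫ gbar) :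
    (h ≫ fbar) ≫ g ≅ (h' ≫ fbar) ≫ g :=
  α_ h fbar g ≪≫ whiskerLeftIso h φ.symm ≪≫ (α_ h gbar f).symm ≪≫ whiskerRightIso β f ≪≫
    α_ h' gbar f ≪≫ whiskerLeftIso h' φ ≪≫ (α_ h' fbar g).symm

lemma transportAlongSquare_symm (φ : gbar ≫ f ≅ fbar ≫ g) {h h' : T ⟶ p}
    (β : h ≫ gbar ≅ h' ≫ gbar) :
    transportAlongSquare φ β.symm = (transportAlongSquare φ β).symm := by
  ext
  simp [transportAlongSquare]

lemma IsBipullback.exists_hom_of_proj (H : IsBipullback f g gbar fbar φ) {h h' : T ⟶ p}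
    (β : h ≫ gbar ≅ h' ≫ gbar) (δ : h ≫ fbar ≅ h' ≫ fbar)
    (hδ : δ.hom ▷ g = (transportAlongSquare φ β).hom) :
    ∃ γ : h ⟶ h', γ ▷ gbar = β.hom ∧ γ ▷ fbar = δ.hom :=
  H.full₂ h h' β.hom δ.hom (by simp [hδ, transportAlongSquare])

lemma IsBipullback.exists_iso_of_proj (H : IsBipullback f g gbar fbar φ) {h h' : T ⟶ p}
    (β : h ≫ gbar ≅ h' ≫ gbar) (δ : h ≫ fbar ≅ h' ≫ fbar)
    (hδ : δ.hom ▷ g = (transportAlongSquare φ β).hom) :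
    ∃ γ : h ≅ h', γ.hom ▷ gbar = β.hom ∧ γ.hom ▷ fbar = δ.hom := by
  have hδ_iso : whiskerRightIso δ g = transportAlongSquare φ β := Iso.ext hδ
  obtain ⟨γ, hγβ, hγδ⟩ := H.exists_hom_of_proj β δ hδ
  obtain ⟨γ', hγ'β, hγ'δ⟩ := H.exists_hom_of_proj β.symm δ.symm
    (by rw [transportAlongSquare_symm, ← hδ_iso]; rfl)
  refine ⟨⟨γ, γ', ?_, ?_⟩, hγβ, hγδ⟩
  · exact H.faithful₂ h h _ _ (by simp [hγβ, hγ'β]) (by simp [hγδ, hγ'δ])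
  · exact H.faithful₂ h' h' _ _ (by simp [hγβ, hγ'β]) (by simp [hγδ, hγ'δ])

end Bipullback

namespace BinaryBiproduct

abbrev projFunctor (b : BinaryBiproduct X X') (W : B) : (W ⟶ b.P) ⥤ (W ⟶ X) × (W ⟶ X') :=
  ((postcomposing W b.P X).obj b.p).prod' ((postcomposing W b.P X').obj b.p')

lemma exists_lift (b : BinaryBiproduct X X') (a : T ⟶ X) (a' : T ⟶ X') :
    ∃ h : T ⟶ b.P, Nonempty (h ≫ b.p ≅ a) ∧ Nonempty (h ≫ b.p' ≅ a') := by
  have := b.ue T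
  let i := (b.projFunctor T).objObjPreimageIso (a, a')
  exact ⟨_, ⟨(CategoryTheory.Prod.fst _ _).mapIso i⟩,
    ⟨(CategoryTheory.Prod.snd _ _).mapIso i⟩⟩

lemma exists_iso_of_proj (b : BinaryBiproduct X X') {h h' : T ⟶ b.P}
    (c : h ≫ b.p ≅ h' ≫ b.p) (c' : h ≫ b.p' ≅ h' ≫ b.p') :
    ∃ γ : h ≅ h', γ.hom ▷ b.p = c.hom ∧ γ.hom ▷ b.p' = c'.hom := by
  have := b.ue T
  have hγ := (b.projFunctor T).map_preimage (c.prod c').hom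
  exact ⟨(b.projFunctor T).preimageIso (c.prod c'), congrArg Prod.fst hγ,
    congrArg Prod.snd hγ⟩

end BinaryBiproduct

/-- A bipullback of `f : X ⟶ Y` along the projection `Y × Y' ⟶ Y` behaves like `X × Y'`. -/
lemma IsBipullback.exists_iso_of_proj_of_biproduct (bY : BinaryBiproduct Y Y') {f : X ⟶ Y}
    {gbar : Q ⟶ X} {fbar : Q ⟶ bY.P} {φ : gbar ≫ f ≅ fbar ≫ bY.p}
    (H : IsBipullback f bY.p gbar fbar φ) {h h' : T ⟶ Q} (β : h ≫ gbar ≅ h' ≫ gbar)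
    (η : h ≫ (fbar ≫ bY.p') ≅ h' ≫ (fbar ≫ bY.p')) :
    ∃ κ : h ≅ h', κ.hom ▷ gbar = β.hom ∧ κ.hom ▷ (fbar ≫ bY.p') = η.hom := by
  obtain ⟨δ, hδ, hδ'⟩ := bY.exists_iso_of_proj (transportAlongSquare φ β)
    (α_ h fbar bY.p' ≪≫ η ≪≫ (α_ h' fbar bY.p').symm)
  obtain ⟨κ, hκβ, hκδ⟩ := H.exists_iso_of_proj β δ hδ
  refine ⟨κ, hκβ, ?_⟩
  simp [Bicategory.whiskerRight_comp, hκδ, hδ']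

/-- Pulling `f'` back further along `Q ⟶ Y'` yields a model `Q₂` of `X × X'`, with projections
`fbar₂ ≫ gbar` and `gbar₂`. -/
lemma IsBipullback.nonempty_iso_of_iterated_proj (bY : BinaryBiproduct Y Y') {f : X ⟶ Y}
    {f' : X' ⟶ Y'} {gbar : Q ⟶ X} {fbar : Q ⟶ bY.P} {φ : gbar ≫ f ≅ fbar ≫ bY.p}
    {gbar₂ : Q₂ ⟶ X'} {fbar₂ : Q₂ ⟶ Q} {φ₂ : gbar₂ ≫ f' ≅ fbar₂ ≫ (fbar ≫ bY.p')}
    (H : IsBipullback f bY.p gbar fbar φ) (H₂ : IsBipullback f' (fbar ≫ bY.p') gbar₂ fbar₂ φ₂)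
    {h h' : T ⟶ Q₂} (β : (h ≫ fbar₂) ≫ gbar ≅ (h' ≫ fbar₂) ≫ gbar)
    (η : h ≫ gbar₂ ≅ h' ≫ gbar₂) :
    Nonempty (h ≅ h') := by
  obtain ⟨κ, -, hκ⟩ := H.exists_iso_of_proj_of_biproduct bY β (transportAlongSquare φ₂ η)
  obtain ⟨γ, -⟩ := H₂.exists_iso_of_proj η κ hκ
  exact ⟨γ⟩

/-- If a bicategory has binary bicategorical products and `R` is a protocalibration,
then `R` is closed under binary products of morphisms: given `f : X ⟶ Y` and
`f' : X' ⟶ Y'` in `R`, any product morphism `m : X × X' ⟶ Y × Y'` (one commuting with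
the projections up to isomorphism) is in `R`. -/
theorem protocalibration_closed_under_binary_products
    (R : ∀ ⦃a b : B⦄, (a ⟶ b) → Prop) (hR : Protocalibration R)
    {X X' Y Y' : B} (bX : BinaryBiproduct X X') (bY : BinaryBiproduct Y Y')
    (f : X ⟶ Y) (f' : X' ⟶ Y') (hf : R f) (hf' : R f')
    (m : bX.P ⟶ bY.P)
    (i₁ : m ≫ bY.p ≅ bX.p ≫ f) (i₂ : m ≫ bY.p' ≅ bX.p' ≫ f') :
    R m := by
  obtain ⟨Q, gbar, fbar, φ, HQ, hfbar⟩ := hR.bipullback f bY.p hf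
  obtain ⟨Q₂, gbar₂, fbar₂, φ₂, HQ₂, hfbar₂⟩ := hR.bipullback f' (fbar ≫ bY.p') hf'
  obtain ⟨n, ian, ibn, -⟩ := HQ.lift bX.p m i₁.symm
  obtain ⟨e, iae, ibe, -⟩ := HQ₂.lift bX.p' n
    (i₂.symm ≪≫ whiskerRightIso ibn.symm bY.p' ≪≫ α_ n fbar bY.p')
  obtain ⟨e', ⟨j⟩, ⟨j'⟩⟩ := bX.exists_lift (fbar₂ ≫ gbar) gbar₂
  obtain ⟨unit, -⟩ := bX.exists_iso_of_proj (h := 𝟙 bX.P) (h' := e ≫ e')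
    (λ_ bX.p ≪≫ ian.symm ≪≫ whiskerRightIso ibe.symm gbar ≪≫ α_ e fbar₂ gbar ≪≫
      (whiskerLeftIso e j).symm ≪≫ (α_ e e' bX.p).symm)
    (λ_ bX.p' ≪≫ iae.symm ≪≫ (whiskerLeftIso e j').symm ≪≫ (α_ e e' bX.p').symm)
  have counit : Nonempty (e' ≫ e ≅ 𝟙 Q₂) := HQ.nonempty_iso_of_iterated_proj bY HQ₂
    (whiskerRightIso (α_ e' e fbar₂ ≪≫ whiskerLeftIso e' ibe) gbar ≪≫ α_ e' n gbar ≪≫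
      whiskerLeftIso e' ian ≪≫ j ≪≫ whiskerRightIso (λ_ fbar₂).symm gbar)
    (α_ e' e gbar₂ ≪≫ whiskerLeftIso e' iae ≪≫ j' ≪≫ (λ_ gbar₂).symm)
  have he : IsEquiv1Cell e := ⟨e', ⟨unit⟩, counit⟩
  exact hR.iso_closed _ m ((α_ e fbar₂ fbar).symm ≪≫ whiskerRightIso ibe fbar ≪≫ ibn)
    (hR.comp_mem _ _ (hR.equiv_mem e he) (hR.comp_mem _ _ hfbar₂ hfbar))
end

section
/- Let E be a lextensive category with protocalibration R closed under finite coproducts. Given spans (u : S → U, v : S → W) and (r : T → V, s : T → W) with u, r ∈ R, the span (u + r : S + T → U + V, [v,s] : S + T → W) composed with the spans i_* and j_* induced by the coproduct injections i : U → U+V and j : V → U+V recovers the given spans up to isomorphism; consequently U −i_*→ U+V ←j_*− V is a bicoproduct in the span bicategory Spn_R E. -/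
/-!
In an extensive category, pulling back along the coproduct injections is inverse to taking
coproducts over `U ⨿ V`: the squares exhibiting `S` and `T` as pullbacks of `u ⨿ r` along the
injections are pullbacks, and every `M ⟶ U ⨿ V` exhibits `M` as the coproduct of its pullbacks
along the two injections (both are the van Kampen property of `U ⨿ V`). Composing a span with
`i_*` pulls its left leg back along `i`, so precomposition with `i_*` and `j_*` is an equivalence
`Spn_R E (U ⨿ V, W) ≌ Spn_R E (U, W) × Spn_R E (V, W)` whose inverse takes the coproduct of two
spans; the left legs stay in `R` because `R` is stable under pullback and under `⨿`.
-/

open CategoryTheory Limits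

universe v u

variable {E : Type u} [Category.{v} E]

/-- A span from `X` to `Y` with left leg in the class `R`:
a 1-morphism of the bicategory `Spn_R E`. -/
structure RSpan (R : MorphismProperty E) (X Y : E) : Type (max u v) where
  mid : E
  left : mid ⟶ X
  right : mid ⟶ Y
  memR : R left

/-- A morphism of `R`-spans (a 2-morphism of `Spn_R E`; for a category `E` the
isomorphism classes of span morphisms are just span morphisms). -/
@[ext]
structure RSpanHom {R : MorphismProperty E} {X Y : E} (f g : RSpan R X Y) : Type v where
  hom : f.mid ⟶ g.mid
  wl : hom ≫ g.left = f.left := by aesop_cat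
  wr : hom ≫ g.right = f.right := by aesop_cat

attribute [simp] RSpanHom.wl RSpanHom.wr

/-- The hom-category `Spn_R E (X, Y)`. -/
instance {R : MorphismProperty E} {X Y : E} : Category (RSpan R X Y) where
  Hom := RSpanHom
  id f := ⟨𝟙 f.mid, by simp, by simp⟩
  comp a b := ⟨a.hom ≫ b.hom, by rw [Category.assoc, b.wl, a.wl],
    by rw [Category.assoc, b.wr, a.wr]⟩
  id_comp a := by apply RSpanHom.ext; simp [CategoryStruct.comp, CategoryStruct.id]
  comp_id a := by apply RSpanHom.ext; simp [CategoryStruct.comp, CategoryStruct.id]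
  assoc a b c := by apply RSpanHom.ext; simp [CategoryStruct.comp]

variable [HasPullbacks E]

/-- Precomposition in `Spn_R E` with the span `i_*` associated to `i : A ⟶ B`
(composition of spans is by pullback; `R`-ness of the left leg of the composite uses
pullback-stability of `R`). -/
@[simps]
noncomputable def precompSpan (R : MorphismProperty E)
    (rpb : ∀ {A B C : E} (i : A ⟶ B) (u : C ⟶ B), R u → R (pullback.fst i u))
    {A B : E} (i : A ⟶ B) (W : E) : RSpan R B W ⥤ RSpan R A W where
  obj h := ⟨pullback i h.left, pullback.fst i h.left,
    pullback.snd i h.left ≫ h.right, rpb i h.left h.memR⟩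
  map {h h'} a :=
    { hom := pullback.map i h.left i h'.left (𝟙 A) a.hom (𝟙 B) (by simp)
        (by simp [a.wl])
      wl := by
        show pullback.lift _ _ _ ≫ pullback.fst i h'.left = _
        rw [pullback.lift_fst, Category.comp_id]
      wr := by
        rw [← Category.assoc, pullback.lift_snd]
        rw [Category.assoc, a.wr]
      }
  map_id h := by
    apply RSpanHom.ext
    apply pullback.hom_ext <;> simp [CategoryStruct.id]
  map_comp a b := by
    apply RSpanHom.ext
    apply pullback.hom_ext <;> simp only [CategoryStruct.comp, pullback.map, Category.assoc] <;>
      (repeat (first | erw [pullback.lift_fst] | erw [pullback.lift_snd] | erw [pullback.lift_fst_assoc] | erw [pullback.lift_snd_assoc])) <;> simp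

namespace RSpan

omit [HasPullbacks E]

variable {R : MorphismProperty E} {X Y : E}

@[simp] lemma comp_hom {f g h : RSpan R X Y} (a : f ⟶ g) (b : g ⟶ h) :
    (a ≫ b).hom = a.hom ≫ b.hom := rfl

@[simp] lemma id_hom (f : RSpan R X Y) : (𝟙 f : f ⟶ f).hom = 𝟙 f.mid := rfl

@[ext] lemma hom_ext {f g : RSpan R X Y} {a b : f ⟶ g} (h : a.hom = b.hom) : a = b :=
  RSpanHom.ext h

lemma isIso_of_isIso_hom {f g : RSpan R X Y} (a : f ⟶ g) [IsIso a.hom] : IsIso a :=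
  ⟨⟨⟨inv a.hom, by simp [IsIso.inv_comp_eq], by simp [IsIso.inv_comp_eq]⟩,
    by ext; simp, by ext; simp⟩⟩

end RSpan

section Precomp

variable (R : MorphismProperty E)
  (rpb : ∀ {A B C : E} (i : A ⟶ B) (u : C ⟶ B), R u → R (pullback.fst i u))
  {A B W : E} (i : A ⟶ B)

/-- The apex of `(precompSpan R rpb i W).obj h` is `pullback i h.left` only after unfolding
`precompSpan`; stating the API through this name keeps `simp` from stalling on that mismatch. -/
noncomputable def precompSpanSnd (h : RSpan R B W) :
    ((precompSpan R rpb i W).obj h).mid ⟶ h.mid :=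
  pullback.snd i h.left

lemma precompSpan_condition (h : RSpan R B W) :
    ((precompSpan R rpb i W).obj h).left ≫ i = precompSpanSnd R rpb i h ≫ h.left :=
  pullback.condition

lemma precompSpanSnd_comp_right (h : RSpan R B W) :
    precompSpanSnd R rpb i h ≫ h.right = ((precompSpan R rpb i W).obj h).right :=
  rfl

@[simp]
lemma precompSpan_map_hom_comp_snd {h h' : RSpan R B W} (a : h ⟶ h') :
    ((precompSpan R rpb i W).map a).hom ≫ precompSpanSnd R rpb i h' =
      precompSpanSnd R rpb i h ≫ a.hom :=
  pullback.lift_snd _ _ _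

lemma precompSpan_hom_ext {k : RSpan R A W} {h : RSpan R B W}
    {a b : k ⟶ (precompSpan R rpb i W).obj h}
    (hsnd : a.hom ≫ precompSpanSnd R rpb i h = b.hom ≫ precompSpanSnd R rpb i h) : a = b :=
  RSpan.hom_ext (pullback.hom_ext (a.wl.trans b.wl.symm) hsnd)

noncomputable def precompSpanLift {k : RSpan R A W} {h : RSpan R B W} (g : k.mid ⟶ h.mid)
    (wl : k.left ≫ i = g ≫ h.left) (wr : g ≫ h.right = k.right) :
    k ⟶ (precompSpan R rpb i W).obj h :=
  ⟨pullback.lift k.left g wl, pullback.lift_fst _ _ _,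
    by rw [← wr]; exact pullback.lift_snd_assoc _ _ _ _⟩

@[simp]
lemma precompSpanLift_hom_comp_snd {k : RSpan R A W} {h : RSpan R B W} (g : k.mid ⟶ h.mid)
    (wl : k.left ≫ i = g ≫ h.left) (wr : g ≫ h.right = k.right) :
    (precompSpanLift R rpb i g wl wr).hom ≫ precompSpanSnd R rpb i h = g :=
  pullback.lift_snd _ _ _

noncomputable def precompSpanIsoOfIsPullback {k : RSpan R A W} {h : RSpan R B W}
    {g : k.mid ⟶ h.mid} (hpb : IsPullback k.left g i h.left) (wr : g ≫ h.right = k.right) :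
    k ≅ (precompSpan R rpb i W).obj h :=
  have hiso : (precompSpanLift R rpb i g hpb.w wr).hom = hpb.isoPullback.hom :=
    pullback.hom_ext ((precompSpanLift R rpb i g hpb.w wr).wl.trans hpb.isoPullback_hom_fst.symm)
      ((precompSpanLift_hom_comp_snd R rpb i g hpb.w wr).trans hpb.isoPullback_hom_snd.symm)
  have : IsIso (precompSpanLift R rpb i g hpb.w wr).hom := hiso ▸ Iso.isIso_hom _
  have := RSpan.isIso_of_isIso_hom (precompSpanLift R rpb i g hpb.w wr)
  asIso (precompSpanLift R rpb i g hpb.w wr)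

@[simp]
lemma precompSpanIsoOfIsPullback_hom {k : RSpan R A W} {h : RSpan R B W}
    {g : k.mid ⟶ h.mid} (hpb : IsPullback k.left g i h.left) (wr : g ≫ h.right = k.right) :
    (precompSpanIsoOfIsPullback R rpb i hpb wr).hom = precompSpanLift R rpb i g hpb.w wr :=
  rfl

end Precomp

section Coprod

omit [HasPullbacks E]

variable [HasBinaryCoproducts E] (R : MorphismProperty E)
  (rmap : ∀ {X Y X' Y' : E} (f : X ⟶ X') (g : Y ⟶ Y'), R f → R g → R (coprod.map f g))
  (U V W : E)

/-- Reducible, so that `simp` sees the apex of `(coprodSpan R rmap U V W).obj p` as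
`p.1.mid ⨿ p.2.mid`. -/
noncomputable abbrev coprodSpan : RSpan R U W × RSpan R V W ⥤ RSpan R (U ⨿ V) W where
  obj p := ⟨p.1.mid ⨿ p.2.mid, coprod.map p.1.left p.2.left,
    coprod.desc p.1.right p.2.right, rmap _ _ p.1.memR p.2.memR⟩
  map a := ⟨coprod.map a.1.hom a.2.hom, by ext <;> simp, by ext <;> simp⟩

variable {R rmap U V W}

@[simps]
noncomputable def coprodSpanDesc {p : RSpan R U W × RSpan R V W} {h : RSpan R (U ⨿ V) W}
    (f : p.1.mid ⟶ h.mid) (g : p.2.mid ⟶ h.mid)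
    (hfl : f ≫ h.left = p.1.left ≫ coprod.inl) (hgl : g ≫ h.left = p.2.left ≫ coprod.inr)
    (hfr : f ≫ h.right = p.1.right) (hgr : g ≫ h.right = p.2.right) :
    (coprodSpan R rmap U V W).obj p ⟶ h :=
  ⟨coprod.desc f g, by apply coprod.hom_ext <;> simp [hfl, hgl],
    by apply coprod.hom_ext <;> simp [hfr, hgr]⟩

lemma coprodSpan_hom_ext {p : RSpan R U W × RSpan R V W} {h : RSpan R (U ⨿ V) W}
    {a b : (coprodSpan R rmap U V W).obj p ⟶ h}
    (hl : coprod.inl ≫ a.hom = coprod.inl ≫ b.hom)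
    (hr : coprod.inr ≫ a.hom = coprod.inr ≫ b.hom) : a = b :=
  RSpan.hom_ext (coprod.hom_ext hl hr)

end Coprod

section Extensive

omit [HasPullbacks E]

variable [FinitaryExtensive E]

lemma isPullback_coprod_map {S T U V : E} (u : S ⟶ U) (r : T ⟶ V) :
    IsPullback u coprod.inl coprod.inl (coprod.map u r) ∧
      IsPullback r coprod.inr coprod.inr (coprod.map u r) := by
  have vk := FinitaryExtensive.vanKampen _ (coprodIsCoprod U V)
  rw [BinaryCofan.isVanKampen_iff] at vk
  obtain ⟨hl, hr⟩ := (vk (BinaryCofan.mk coprod.inl coprod.inr) u r (coprod.map u r)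
    (coprod.inl_map u r).symm (coprod.inr_map u r).symm).mp ⟨coprodIsCoprod S T⟩
  exact ⟨hl.flip, hr.flip⟩

lemma isIso_coprod_desc_pullback_snd {U V M : E} (h : M ⟶ U ⨿ V) :
    IsIso (coprod.desc (pullback.snd coprod.inl h) (pullback.snd coprod.inr h)) := by
  have vk := FinitaryExtensive.vanKampen _ (coprodIsCoprod U V)
  rw [BinaryCofan.isVanKampen_iff] at vk
  have hl := IsPullback.of_hasPullback (coprod.inl : U ⟶ U ⨿ V) h
  have hr := IsPullback.of_hasPullback (coprod.inr : V ⟶ U ⨿ V) h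
  obtain ⟨hM⟩ := (vk (BinaryCofan.mk _ _) _ _ h hl.w hr.w).mpr ⟨hl.flip, hr.flip⟩
  exact (colimit.isColimit _).nonempty_isColimit_iff_isIso_desc.mp ⟨hM⟩

end Extensive

section Bicoproduct

variable [FinitaryExtensive E] (R : MorphismProperty E)
  (rpb : ∀ {A B C : E} (i : A ⟶ B) (u : C ⟶ B), R u → R (pullback.fst i u))
  (rmap : ∀ {X Y X' Y' : E} (f : X ⟶ X') (g : Y ⟶ Y'), R f → R g → R (coprod.map f g))
  {U V W : E}

noncomputable def precompInlCoprodSpanIso (p : RSpan R U W × RSpan R V W) :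
    p.1 ≅ (precompSpan R rpb coprod.inl W).obj ((coprodSpan R rmap U V W).obj p) :=
  precompSpanIsoOfIsPullback R rpb _ (isPullback_coprod_map p.1.left p.2.left).1
    (coprod.inl_desc p.1.right p.2.right)

noncomputable def precompInrCoprodSpanIso (p : RSpan R U W × RSpan R V W) :
    p.2 ≅ (precompSpan R rpb coprod.inr W).obj ((coprodSpan R rmap U V W).obj p) :=
  precompSpanIsoOfIsPullback R rpb _ (isPullback_coprod_map p.1.left p.2.left).2
    (coprod.inr_desc p.1.right p.2.right)

noncomputable def coprodSpanPrecompIso (h : RSpan R (U ⨿ V) W) :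
    (coprodSpan R rmap U V W).obj
      ((precompSpan R rpb coprod.inl W).obj h, (precompSpan R rpb coprod.inr W).obj h) ≅ h :=
  let φ : (coprodSpan R rmap U V W).obj
      ((precompSpan R rpb coprod.inl W).obj h, (precompSpan R rpb coprod.inr W).obj h) ⟶ h :=
    coprodSpanDesc (precompSpanSnd R rpb _ h) (precompSpanSnd R rpb _ h)
      (precompSpan_condition R rpb _ h).symm (precompSpan_condition R rpb _ h).symm
      (precompSpanSnd_comp_right R rpb _ h) (precompSpanSnd_comp_right R rpb _ h)
  have : IsIso φ.hom := isIso_coprod_desc_pullback_snd h.left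
  have := RSpan.isIso_of_isIso_hom φ
  asIso φ

lemma coprodSpanPrecompIso_hom_naturality {h h' : RSpan R (U ⨿ V) W} (a : h ⟶ h') :
    (coprodSpan R rmap U V W).map
        ((precompSpan R rpb coprod.inl W).map a, (precompSpan R rpb coprod.inr W).map a) ≫
      (coprodSpanPrecompIso R rpb rmap h').hom = (coprodSpanPrecompIso R rpb rmap h).hom ≫ a := by
  apply coprodSpan_hom_ext (rmap := rmap) <;> simp [coprodSpanPrecompIso, -precompSpan_map_hom]

lemma precompInlCoprodSpanIso_hom_naturality {p q : RSpan R U W × RSpan R V W} (a : p ⟶ q) :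
    a.1 ≫ (precompInlCoprodSpanIso R rpb rmap q).hom =
      (precompInlCoprodSpanIso R rpb rmap p).hom ≫
        (precompSpan R rpb coprod.inl W).map ((coprodSpan R rmap U V W).map a) := by
  apply precompSpan_hom_ext
  simp [precompInlCoprodSpanIso, -precompSpan_map_hom, reassoc_of% precompSpanLift_hom_comp_snd]

lemma precompInrCoprodSpanIso_hom_naturality {p q : RSpan R U W × RSpan R V W} (a : p ⟶ q) :
    a.2 ≫ (precompInrCoprodSpanIso R rpb rmap q).hom =
      (precompInrCoprodSpanIso R rpb rmap p).hom ≫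
        (precompSpan R rpb coprod.inr W).map ((coprodSpan R rmap U V W).map a) := by
  apply precompSpan_hom_ext
  simp [precompInrCoprodSpanIso, -precompSpan_map_hom, reassoc_of% precompSpanLift_hom_comp_snd]

noncomputable def precompCoprodInjEquivalence :
    RSpan R (U ⨿ V) W ≌ RSpan R U W × RSpan R V W :=
  CategoryTheory.Equivalence.mk
    ((precompSpan R rpb coprod.inl W).prod' (precompSpan R rpb coprod.inr W))
    (coprodSpan R rmap U V W)
    (NatIso.ofComponents (coprodSpanPrecompIso R rpb rmap)
      (coprodSpanPrecompIso_hom_naturality R rpb rmap)).symm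
    (NatIso.ofComponents
      (fun p => (precompInlCoprodSpanIso R rpb rmap p).prod (precompInrCoprodSpanIso R rpb rmap p))
      fun a => Prod.ext (precompInlCoprodSpanIso_hom_naturality R rpb rmap a)
        (precompInrCoprodSpanIso_hom_naturality R rpb rmap a)).symm

end Bicoproduct

theorem coprod_is_bicoproduct_in_RSpan_general
    [FinitaryExtensive E]
    (R : MorphismProperty E)
    (rpb : ∀ {A B C : E} (i : A ⟶ B) (u : C ⟶ B), R u → R (pullback.fst i u))
    (rmap : ∀ {X Y X' Y' : E} (f : X ⟶ X') (g : Y ⟶ Y'), R f → R g → R (coprod.map f g))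
    (U V W : E) :
    (∀ {S T : E} (u : S ⟶ U) (v : S ⟶ W) (r : T ⟶ V) (s : T ⟶ W)
      (hu : R u) (hr : R r),
      Nonempty ((precompSpan R rpb (coprod.inl : U ⟶ U ⨿ V) W).obj
          ⟨S ⨿ T, coprod.map u r, coprod.desc v s, rmap u r hu hr⟩
        ≅ (⟨S, u, v, hu⟩ : RSpan R U W)) ∧
      Nonempty ((precompSpan R rpb (coprod.inr : V ⟶ U ⨿ V) W).obj
          ⟨S ⨿ T, coprod.map u r, coprod.desc v s, rmap u r hu hr⟩
        ≅ (⟨T, r, s, hr⟩ : RSpan R V W))) ∧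
    ((precompSpan R rpb (coprod.inl : U ⟶ U ⨿ V) W).prod'
      (precompSpan R rpb (coprod.inr : V ⟶ U ⨿ V) W)).IsEquivalence :=
  ⟨fun u v r s hu hr =>
    ⟨⟨(precompInlCoprodSpanIso R rpb rmap (⟨_, u, v, hu⟩, ⟨_, r, s, hr⟩)).symm⟩,
      ⟨(precompInrCoprodSpanIso R rpb rmap (⟨_, u, v, hu⟩, ⟨_, r, s, hr⟩)).symm⟩⟩,
    (precompCoprodInjEquivalence R rpb rmap).isEquivalence_functor⟩

/-- Let `E` be lextensive and `R` a protocalibration closed under finite coproducts.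
Given `R`-spans `(u : S ⟶ U, v : S ⟶ W)` and `(r : T ⟶ V, s : T ⟶ W)`, the span
`(u + r : S ⨿ T ⟶ U ⨿ V, [v,s] : S ⨿ T ⟶ W)` composed with the spans `i_*`, `j_*` of
the coproduct injections recovers the given spans up to isomorphism; consequently
`U ⟶ U ⨿ V ⟵ V` is a bicoproduct in `Spn_R E`: for every `W` the precomposition
functor `Spn_R E (U ⨿ V, W) ⥤ Spn_R E (U, W) × Spn_R E (V, W)` is an equivalence. -/
theorem coprod_is_bicoproduct_in_RSpan
    [HasFiniteLimits E] [HasFiniteCoproducts E] [FinitaryExtensive E]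
    (R : MorphismProperty E)
    (riso : ∀ {X Y : E} (f : X ⟶ Y), IsIso f → R f)
    (rcomp : ∀ {X Y Z : E} (f : X ⟶ Y) (g : Y ⟶ Z), R f → R g → R (f ≫ g))
    (rpb : ∀ {A B C : E} (i : A ⟶ B) (u : C ⟶ B), R u → R (pullback.fst i u))
    (rinit : ∀ X : E, R (initial.to X))
    (rinl : ∀ X Y : E, R (coprod.inl : X ⟶ X ⨿ Y))
    (rinr : ∀ X Y : E, R (coprod.inr : Y ⟶ X ⨿ Y))
    (rdesc : ∀ {X Y Z : E} (f : X ⟶ Z) (g : Y ⟶ Z), R f → R g → R (coprod.desc f g))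
    (rmap : ∀ {X Y X' Y' : E} (f : X ⟶ X') (g : Y ⟶ Y'), R f → R g → R (coprod.map f g))
    (U V W : E) :
    (∀ {S T : E} (u : S ⟶ U) (v : S ⟶ W) (r : T ⟶ V) (s : T ⟶ W)
      (hu : R u) (hr : R r),
      Nonempty ((precompSpan R rpb (coprod.inl : U ⟶ U ⨿ V) W).obj
          ⟨S ⨿ T, coprod.map u r, coprod.desc v s, rmap u r hu hr⟩
        ≅ (⟨S, u, v, hu⟩ : RSpan R U W)) ∧
      Nonempty ((precompSpan R rpb (coprod.inr : V ⟶ U ⨿ V) W).obj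
          ⟨S ⨿ T, coprod.map u r, coprod.desc v s, rmap u r hu hr⟩
        ≅ (⟨T, r, s, hr⟩ : RSpan R V W))) ∧
    ((precompSpan R rpb (coprod.inl : U ⟶ U ⨿ V) W).prod'
      (precompSpan R rpb (coprod.inr : V ⟶ U ⨿ V) W)).IsEquivalence :=
  coprod_is_bicoproduct_in_RSpan_general R rpb rmap U V W
end
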